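/- For all closed λ-terms M and N, if M βΩ-converts to N (full βΩ-conversion, with contractions allowed in arbitrary contexts), then M =ω N. -/

import Mathlib

/-- Untyped λ-terms in de Bruijn representation. -/
inductive Lam : Type
  | var : ℕ → Lam
  | app : Lam → Lam → Lam
  | lam : Lam → Lam
deriving DecidableEq

namespace Lam

/-- Lift (shift) the free variables ≥ d by one. -/
def lift : ℕ → Lam → Lam
  | d, var n => if n < d then var n else var (n + 1)
  | d, app M N => app (lift d M) (lift d N)
  | d, lam M => lam (lift (d + 1) M)

/-- Capture-avoiding substitution of N for the free variable k. -/
def subst : ℕ → Lam → Lam → Lam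
  | k, N, var n => if n = k then N else if k < n then var (n - 1) else var n
  | k, N, app A B => app (subst k N A) (subst k N B)
  | k, N, lam M => lam (subst (k + 1) (lift 0 N) M)

/-- All free variables are < k. -/
def ClosedUnder : ℕ → Lam → Prop
  | k, var n => n < k
  | k, app A B => ClosedUnder k A ∧ ClosedUnder k B
  | k, lam M => ClosedUnder (k + 1) M

/-- A term is closed if it has no free variables. -/
def Closed (M : Lam) : Prop := ClosedUnder 0 M

/-- x occurs free in the term. -/
def FreeIn : ℕ → Lam → Prop
  | x, var n => n = x
  | x, app A B => FreeIn x A ∨ FreeIn x B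
  | x, lam M => FreeIn (x + 1) M

/-- The minimal number of abstractions needed to close the term. -/
def fvBound : Lam → ℕ
  | var n => n + 1
  | app A B => max (fvBound A) (fvBound B)
  | lam M => fvBound M - 1

/-- Iterated abstraction λz₁…zₙ.M. -/
def absN : ℕ → Lam → Lam
  | 0, M => M
  | n + 1, M => lam (absN n M)

/-- The λ-closure of a term: abstraction over all its free variables. -/
def close (M : Lam) : Lam := absN (fvBound M) M

/-- One-step β-reduction (closed under arbitrary contexts). -/
inductive Beta : Lam → Lam → Prop
  | beta (U V) : Beta (app (lam U) V) (subst 0 V U)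
  | appL {M M'} (N) : Beta M M' → Beta (app M N) (app M' N)
  | appR (M) {N N'} : Beta N N' → Beta (app M N) (app M N')
  | lam {M M'} : Beta M M' → Beta (lam M) (lam M')

/-- Many-step β-reduction. -/
def BetaStar : Lam → Lam → Prop := Relation.ReflTransGen Beta

/-- β-conversion. -/
def BetaConv : Lam → Lam → Prop := Relation.EqvGen Beta

def iComb : Lam := lam (var 0)
def omegaComb : Lam := lam (app (var 0) (var 0))
def Omega : Lam := app omegaComb omegaComb
def Kstar : Lam := lam (lam (var 0))

/-- Apply a term to a list of arguments: M N₁ ⋯ Nₖ. -/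
def appList : Lam → List Lam → Lam
  | M, [] => M
  | M, N :: Ns => appList (app M N) Ns

/-- A term is solvable iff its λ-closure applied to some closed terms β-converts to I. -/
def Solvable (M : Lam) : Prop :=
  ∃ Ns : List Lam, (∀ N ∈ Ns, Closed N) ∧ BetaConv (appList (close M) Ns) iComb

/-- One-step weak βΩ-reduction. -/
inductive WBO : Lam → Lam → Prop
  | wbeta (U V) : Closed (app (lam U) V) → WBO (app (lam U) V) (subst 0 V U)
  | womega (M) : Closed M → ¬ Solvable M → M ≠ Omega → WBO M Omega
  | appL {M M'} (N) : WBO M M' → WBO (app M N) (app M' N)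
  | appR (M) {N N'} : WBO N N' → WBO (app M N) (app M N')
  | lam {M M'} : WBO M M' → WBO (lam M) (lam M')

/-- Many-step weak βΩ-reduction. -/
def WBOStar : Lam → Lam → Prop := Relation.ReflTransGen WBO

/-- Weak βΩ-conversion. -/
def WBOConv : Lam → Lam → Prop := Relation.EqvGen WBO

/-- One-step full βΩ-reduction (Ω-contraction allowed on open terms,
unsolvability referring to the λ-closure). -/
inductive BO : Lam → Lam → Prop
  | beta (U V) : BO (app (lam U) V) (subst 0 V U)
  | omega (M) : ¬ Solvable M → M ≠ Omega → BO M Omega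
  | appL {M M'} (N) : BO M M' → BO (app M N) (app M' N)
  | appR (M) {N N'} : BO N N' → BO (app M N) (app M N')
  | lam {M M'} : BO M M' → BO (lam M) (lam M')

/-- Many-step full βΩ-reduction. -/
def BOStar : Lam → Lam → Prop := Relation.ReflTransGen BO

/-- Full βΩ-conversion. -/
def BOConv : Lam → Lam → Prop := Relation.EqvGen BO

/-- A term is in βΩ-normal form iff it admits no βΩ-reduction, i.e. it contains
no β-redex and no unsolvable subterm other than Ω. -/
def BONormal (M : Lam) : Prop := ∀ N, ¬ BO M N

/-- Head weak β-reduction: contraction of the head redex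
λx₁…xₙ.(λx.U)V M₁⋯Mₖ → λx₁…xₙ.([V/x]U)M₁⋯Mₖ with (λx.U)V closed. -/
inductive HeadWBeta : Lam → Lam → Prop
  | head (U V) : Closed (app (lam U) V) → HeadWBeta (app (lam U) V) (subst 0 V U)
  | app {M M'} (N) : (∀ U, M ≠ lam U) → HeadWBeta M M' → HeadWBeta (app M N) (app M' N)
  | lam {M M'} : HeadWBeta M M' → HeadWBeta (lam M) (lam M')

/-- The head variable of the term is the free variable x,
i.e. the term has the form λy₁…yᵣ. x X₁ ⋯ Xₘ. -/
inductive HeadVar : ℕ → Lam → Prop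
  | var (x) : HeadVar x (var x)
  | app {x M} (N) : (∀ U, M ≠ lam U) → HeadVar x M → HeadVar x (app M N)
  | lam {x M} : HeadVar (x + 1) M → HeadVar x (lam M)

/-- Subterm relation. -/
inductive Subterm : Lam → Lam → Prop
  | refl (M) : Subterm M M
  | appL {S M} (N) : Subterm S M → Subterm S (app M N)
  | appR (M) {S N} : Subterm S N → Subterm S (app M N)
  | lam {S M} : Subterm S M → Subterm S (lam M)

/-- A closed term is in weak βΩ head normal form iff it is unsolvable and equal
to Ω, or solvable and without a head weak β-redex. -/
def WHnf (M : Lam) : Prop :=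
  (¬ Solvable M ∧ M = Omega) ∨ (Solvable M ∧ ∀ N, ¬ HeadWBeta M N)

/-- Equality in the theory Hω. -/
inductive HOmega : Lam → Lam → Prop
  | refl (M) : Closed M → HOmega M M
  | wbetaL (U N) : Closed (app (lam U) N) → HOmega (app (lam U) N) (subst 0 N U)
  | wbetaR (U N) : Closed (app (lam U) N) → HOmega (subst 0 N U) (app (lam U) N)
  | unsolvL (M) : Closed M → ¬ Solvable M → HOmega M Omega
  | unsolvR (M) : Closed M → ¬ Solvable M → HOmega Omega M
  | leibnitz (X Y M N) : ClosedUnder 1 X → ClosedUnder 1 Y → Closed M → Closed N →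
      HOmega (subst 0 M X) (subst 0 M Y) → HOmega M N →
      HOmega (subst 0 N X) (subst 0 N Y)
  | omega_rule (P Q) : Closed P → Closed Q →
      (∀ M, Closed M → HOmega (app P M) (app Q M)) → HOmega P Q

/-- The n-fold application fⁿ z in the Church numeral. -/
def churchBody : ℕ → Lam
  | 0 => var 0
  | n + 1 => app (var 1) (churchBody n)

/-- The n-th Church numeral. -/
def church (n : ℕ) : Lam := lam (lam (churchBody n))


-- ===================== auxiliary lemmas =====================

lemma subst_var_eq (k : ℕ) (N : Lam) : subst k N (var k) = N := by simp [subst]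

lemma subst_var_gt {k n : ℕ} (N : Lam) (h : k < n) : subst k N (var n) = var (n-1) := by
  simp only [subst]; rw [if_neg (by omega), if_pos h]

lemma subst_var_lt {k n : ℕ} (N : Lam) (h : n < k) : subst k N (var n) = var n := by
  simp only [subst]; rw [if_neg (by omega), if_neg (by omega)]

lemma lift_var_lt {d n : ℕ} (h : n < d) : lift d (var n) = var n := by
  simp only [lift]; rw [if_pos h]

lemma lift_var_ge {d n : ℕ} (h : d ≤ n) : lift d (var n) = var (n+1) := by
  simp only [lift]; rw [if_neg (by omega)]

lemma closedUnder_mono : ∀ {M : Lam} {k j : ℕ}, ClosedUnder k M → k ≤ j → ClosedUnder j M := by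
  intro M
  induction M with
  | var n => intro k j h hkj; simp only [ClosedUnder] at *; omega
  | app A B ihA ihB => intro k j h hkj; exact ⟨ihA h.1 hkj, ihB h.2 hkj⟩
  | lam M ih => intro k j h hkj; exact ih h (by omega)

lemma lift_closed : ∀ {M : Lam} {d : ℕ}, ClosedUnder d M → lift d M = M := by
  intro M
  induction M with
  | var n => intro d h; simp only [ClosedUnder] at h; rw [lift_var_lt h]
  | app A B ihA ihB => intro d h; simp only [lift]; rw [ihA h.1, ihB h.2]
  | lam M ih => intro d h; simp only [lift]; rw [ih h]

lemma lift_closed0 {M : Lam} (h : Closed M) (d : ℕ) : lift d M = M :=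
  lift_closed (closedUnder_mono h (Nat.zero_le d))

lemma subst_closed : ∀ {M : Lam} {k : ℕ} (N : Lam), ClosedUnder k M → subst k N M = M := by
  intro M
  induction M with
  | var n => intro k N h; simp only [ClosedUnder] at h; rw [subst_var_lt N h]
  | app A B ihA ihB => intro k N h; simp only [subst]; rw [ihA N h.1, ihB N h.2]
  | lam M ih => intro k N h; simp only [subst]; rw [ih _ h]

lemma subst_closed0 {M : Lam} (k : ℕ) (N : Lam) (h : Closed M) : subst k N M = M :=
  subst_closed N (closedUnder_mono h (Nat.zero_le k))

lemma closedUnder_subst : ∀ {M : Lam} {k j : ℕ} {N : Lam}, ClosedUnder (k+1) M → Closed N →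
    j ≤ k → ClosedUnder k (subst j N M) := by
  intro M
  induction M with
  | var n =>
      intro k j N h hN hjk
      simp only [ClosedUnder] at h
      simp only [subst]
      split_ifs with h1 h2
      · exact closedUnder_mono hN (Nat.zero_le k)
      · simp only [ClosedUnder]; omega
      · simp only [ClosedUnder]; omega
  | app A B ihA ihB =>
      intro k j N h hN hjk
      exact ⟨ihA h.1 hN hjk, ihB h.2 hN hjk⟩
  | lam M ih =>
      intro k j N h hN hjk
      simp only [subst, ClosedUnder]
      rw [lift_closed0 hN]
      exact ih h hN (by omega)

lemma lift_subst {N : Lam} (hN : Closed N) :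
    ∀ (V : Lam) {d k : ℕ}, d ≤ k → lift d (subst k N V) = subst (k+1) N (lift d V) := by
  intro V
  induction V with
  | var n =>
      intro d k hdk
      rcases Nat.lt_trichotomy n k with h | h | h
      · rw [subst_var_lt N h]
        by_cases h2 : n < d
        · rw [lift_var_lt h2, subst_var_lt N (by omega)]
        · rw [lift_var_ge (by omega), subst_var_lt N (by omega)]
      · subst h
        rw [subst_var_eq, lift_closed0 hN, lift_var_ge hdk, subst_var_eq]
      · rw [subst_var_gt N h, lift_var_ge (show d ≤ n - 1 by omega),
          lift_var_ge (show d ≤ n by omega), subst_var_gt N (by omega)]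
        congr 1; omega
  | app A B ihA ihB =>
      intro d k hdk
      simp only [subst, lift]
      rw [ihA hdk, ihB hdk]
  | lam M ih =>
      intro d k hdk
      simp only [subst, lift]
      rw [lift_closed0 hN, ih (by omega)]

lemma subst_subst {N : Lam} (hN : Closed N) :
    ∀ (U : Lam) {V : Lam} {i k : ℕ}, i ≤ k →
      subst k N (subst i V U) = subst i (subst k N V) (subst (k+1) N U) := by
  intro U
  induction U with
  | var n =>
      intro V i k hik
      by_cases h1 : n = i
      · subst h1
        rw [subst_var_eq n V, subst_var_lt (k := k+1) N (by omega), subst_var_eq]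
      · by_cases h2 : n = k + 1
        · subst h2
          rw [subst_var_gt V (by omega), Nat.add_sub_cancel, subst_var_eq, subst_var_eq,
            subst_closed0 _ _ hN]
        · rcases Nat.lt_or_ge n i with h3 | h3
          · rw [subst_var_lt V h3, subst_var_lt N (by omega), subst_var_lt N (by omega),
              subst_var_lt _ h3]
          · have h4 : i < n := by omega
            rcases Nat.lt_or_ge n (k+1) with h5 | h5
            · rw [subst_var_gt V h4, subst_var_lt N (by omega), subst_var_lt N h5,
                subst_var_gt _ h4]
            · have h6 : k + 1 < n := by omega
              rw [subst_var_gt V h4, subst_var_gt N (by omega), subst_var_gt N h6,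
                subst_var_gt _ (by omega)]
  | app A B ihA ihB =>
      intro V i k hik
      simp only [subst]
      rw [ihA hik, ihB hik]
  | lam M ih =>
      intro V i k hik
      simp only [subst]
      rw [lift_closed0 hN, lift_subst hN V (Nat.zero_le k), ih (by omega)]

/-- swap two closed substitutions -/
lemma subst_swap {a N : Lam} (ha : Closed a) (hN : Closed N) (j : ℕ) (M : Lam) :
    subst 0 a (subst (j+1) N M) = subst j N (subst 0 a M) := by
  rw [subst_subst hN M (Nat.zero_le j), subst_closed0 _ _ ha]

/-- simultaneous (sequential) substitution of a list of closed terms -/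
def msubst : List Lam → Lam → Lam
  | [], M => M
  | N :: σ, M => msubst σ (subst 0 N M)

lemma msubst_app : ∀ (σ : List Lam) (A B : Lam),
    msubst σ (app A B) = app (msubst σ A) (msubst σ B) := by
  intro σ
  induction σ with
  | nil => intro A B; rfl
  | cons a σ ih => intro A B; simp only [msubst, subst]; exact ih _ _

lemma msubst_closed : ∀ (σ : List Lam) {M : Lam}, Closed M → msubst σ M = M := by
  intro σ
  induction σ with
  | nil => intro M _; rfl
  | cons a σ ih => intro M h; simp only [msubst]; rw [subst_closed0 _ _ h, ih h]

lemma msubst_append : ∀ (σ₁ σ₂ : List Lam) (M : Lam),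
    msubst (σ₁ ++ σ₂) M = msubst σ₂ (msubst σ₁ M) := by
  intro σ₁
  induction σ₁ with
  | nil => intro σ₂ M; rfl
  | cons a σ ih => intro σ₂ M; simp only [List.cons_append, msubst]; exact ih _ _

lemma closedUnder_msubst : ∀ (σ : List Lam) {k : ℕ} {M : Lam}, (∀ N ∈ σ, Closed N) →
    ClosedUnder (k + σ.length) M → ClosedUnder k (msubst σ M) := by
  intro σ
  induction σ with
  | nil => intro k M _ h; exact h
  | cons a σ ih =>
      intro k M hσ h
      simp only [msubst]
      apply ih (fun N hn => hσ N (List.mem_cons_of_mem _ hn))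
      have : ClosedUnder (k + σ.length + 1) M := by
        apply closedUnder_mono h; simp [List.length_cons]; omega
      exact closedUnder_subst this (hσ a List.mem_cons_self) (Nat.zero_le _)

lemma closed_msubst {σ : List Lam} {M : Lam} (hσ : ∀ N ∈ σ, Closed N)
    (h : ClosedUnder σ.length M) : Closed (msubst σ M) :=
  closedUnder_msubst σ hσ (by rwa [Nat.zero_add])

lemma closedUnder_fvBound : ∀ (M : Lam), ClosedUnder (fvBound M) M := by
  intro M
  induction M with
  | var n => simp only [ClosedUnder, fvBound]; omega
  | app A B ihA ihB =>
      exact ⟨closedUnder_mono ihA (le_max_left _ _), closedUnder_mono ihB (le_max_right _ _)⟩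
  | lam M ih =>
      simp only [ClosedUnder, fvBound]
      exact closedUnder_mono ih (by omega)

lemma fvBound_le : ∀ {M : Lam} {k : ℕ}, ClosedUnder k M → fvBound M ≤ k := by
  intro M
  induction M with
  | var n => intro k h; simp only [ClosedUnder] at h; simp only [fvBound]; omega
  | app A B ihA ihB =>
      intro k h; simp only [fvBound]
      exact max_le (ihA h.1) (ihB h.2)
  | lam M ih =>
      intro k h; simp only [fvBound]
      have := ih h; omega

lemma closed_fvBound {M : Lam} (h : Closed M) : fvBound M = 0 := by
  have := fvBound_le h; omega

lemma close_closed_eq {M : Lam} (h : Closed M) : close M = M := by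
  rw [close, closed_fvBound h]; rfl

lemma closedUnder_of_fvBound_le {M : Lam} {k : ℕ} (h : fvBound M ≤ k) : ClosedUnder k M :=
  closedUnder_mono (closedUnder_fvBound M) h

/-- lemma T -/
lemma msubst_subst_len : ∀ (σ : List Lam) {N M : Lam}, (∀ X ∈ σ, Closed X) → Closed N →
    msubst σ (subst σ.length N M) = subst 0 N (msubst σ M) := by
  intro σ
  induction σ with
  | nil => intro N M _ _; rfl
  | cons a σ ih =>
      intro N M hσ hN
      have ha : Closed a := hσ a List.mem_cons_self
      simp only [msubst, List.length_cons]
      rw [subst_swap ha hN σ.length M, ih (fun X hx => hσ X (List.mem_cons_of_mem _ hx)) hN]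

/-- lemma L : structure of msubst of a lambda -/
lemma msubst_lam : ∀ (σ : List Lam), (∀ X ∈ σ, Closed X) → ∀ (M : Lam),
    ∃ B, msubst σ (lam M) = lam B ∧ ∀ P, Closed P → subst 0 P B = msubst (P :: σ) M := by
  intro σ
  induction σ with
  | nil => intro _ M; exact ⟨M, rfl, fun P _ => rfl⟩
  | cons a σ ih =>
      intro hσ M
      have ha : Closed a := hσ a List.mem_cons_self
      have hσ' := fun X hx => hσ X (List.mem_cons_of_mem _ hx)
      obtain ⟨B, hB, hBs⟩ := ih hσ' (subst 1 a M)
      refine ⟨B, ?_, ?_⟩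
      · simp only [msubst, subst]
        rw [lift_closed0 ha]
        exact hB
      · intro P hP
        rw [hBs P hP]
        simp only [msubst]
        rw [show subst 0 P (subst 1 a M) = subst 0 a (subst 0 P M) from subst_swap hP ha 0 M]

/-- lemma M : msubst commutes with substituting an open term -/
lemma msubst_subst0 : ∀ (σ : List Lam), (∀ X ∈ σ, Closed X) → ∀ (U V : Lam),
    fvBound V ≤ σ.length → msubst σ (subst 0 V U) = msubst (msubst σ V :: σ) U := by
  intro σ
  induction σ with
  | nil => intro _ U V _; rfl
  | cons a σ ih =>
      intro hσ U V hV
      have ha : Closed a := hσ a List.mem_cons_self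
      have hσ' := fun X hx => hσ X (List.mem_cons_of_mem _ hx)
      have hV' : fvBound (subst 0 a V) ≤ σ.length := by
        apply fvBound_le
        apply closedUnder_subst (k := σ.length) ?_ ha (Nat.zero_le _)
        apply closedUnder_of_fvBound_le
        simpa [List.length_cons] using hV
      have hQ : Closed (msubst σ (subst 0 a V)) :=
        closed_msubst hσ' (closedUnder_of_fvBound_le hV')
      simp only [msubst]
      rw [show subst 0 a (subst 0 V U) = subst 0 (subst 0 a V) (subst 1 a U) from
        subst_subst ha U (Nat.le_refl 0)]
      rw [ih hσ' (subst 1 a U) (subst 0 a V) hV']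
      simp only [msubst]
      rw [show subst 0 (msubst σ (subst 0 a V)) (subst 1 a U)
            = subst 0 a (subst 0 (msubst σ (subst 0 a V)) U) from subst_swap hQ ha 0 U]

lemma subst_absN {N : Lam} (hN : Closed N) :
    ∀ (n j : ℕ) (M : Lam), subst j N (absN n M) = absN n (subst (j + n) N M) := by
  intro n
  induction n with
  | zero => intro j M; rfl
  | succ n ih =>
      intro j M
      simp only [absN, subst]
      rw [lift_closed0 hN, ih (j+1) M,
        show j + 1 + n = j + (n + 1) from by omega]

lemma beta_appList {X Y : Lam} (h : Beta X Y) : ∀ (L : List Lam),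
    Beta (appList X L) (appList Y L) := by
  intro L
  induction L generalizing X Y with
  | nil => exact h
  | cons a L ih => exact ih (Beta.appL a h)

lemma betastar_appList {X Y : Lam} (h : BetaStar X Y) (L : List Lam) :
    BetaStar (appList X L) (appList Y L) := by
  induction h with
  | refl => exact Relation.ReflTransGen.refl
  | tail _ hstep ih => exact Relation.ReflTransGen.tail ih (beta_appList hstep L)

lemma appList_append : ∀ (L₁ L₂ : List Lam) (X : Lam),
    appList X (L₁ ++ L₂) = appList (appList X L₁) L₂ := by
  intro L₁
  induction L₁ with
  | nil => intro L₂ X; rfl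
  | cons a L ih => intro L₂ X; simp only [List.cons_append, appList]; exact ih _ _

/-- lemma R -/
lemma absN_reduce : ∀ (σ : List Lam) (M : Lam), (∀ X ∈ σ, Closed X) →
    BetaStar (appList (absN σ.length M) σ.reverse) (msubst σ M) := by
  intro σ
  induction σ using List.reverseRecOn with
  | nil => intro M _; exact Relation.ReflTransGen.refl
  | append_singleton σ N ih =>
      intro M hσ
      have hN : Closed N := hσ N (by simp)
      have hσ' : ∀ X ∈ σ, Closed X := fun X hx => hσ X (by simp [hx])
      have hlen : (σ ++ [N]).length = σ.length + 1 := by simp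
      have hrev : (σ ++ [N]).reverse = N :: σ.reverse := by simp
      rw [hlen, hrev]
      have hstep : Beta (app (lam (absN σ.length M)) N)
          (absN σ.length (subst σ.length N M)) := by
        have := Beta.beta (absN σ.length M) N
        rwa [subst_absN hN σ.length 0 M, Nat.zero_add] at this
      have h1 : BetaStar (appList (absN (σ.length + 1) M) (N :: σ.reverse))
          (appList (absN σ.length (subst σ.length N M)) σ.reverse) := by
        exact Relation.ReflTransGen.single (beta_appList hstep σ.reverse)
      have h2 := ih (subst σ.length N M) hσ'
      rw [msubst_subst_len σ hσ' hN] at h2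
      rw [msubst_append σ [N] M]
      simp only [msubst]
      exact Relation.ReflTransGen.trans h1 h2

lemma betastar_conv {X Y : Lam} (h : BetaStar X Y) : BetaConv X Y := by
  induction h with
  | refl => exact Relation.EqvGen.refl _
  | tail _ hstep ih => exact Relation.EqvGen.trans _ _ _ ih (Relation.EqvGen.rel _ _ hstep)

/-- Solvability transfers back along closed substitutions -/
lemma solvable_msubst {σ : List Lam} {M : Lam} (hσ : ∀ X ∈ σ, Closed X)
    (hb : fvBound M ≤ σ.length) (h : Solvable (msubst σ M)) : Solvable M := by
  classical
  set k := fvBound M with hk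
  set σ₁ := σ.take k with hσ₁
  have hσ₁c : ∀ X ∈ σ₁, Closed X := fun X hx => hσ X (List.mem_of_mem_take hx)
  have hlen₁ : σ₁.length = k := by
    rw [hσ₁, List.length_take]; omega
  have hM₁ : Closed (msubst σ₁ M) := by
    apply closed_msubst hσ₁c
    rw [hlen₁]
    exact closedUnder_fvBound M
  have heq : msubst σ M = msubst σ₁ M := by
    conv_lhs => rw [← List.take_append_drop k σ]
    rw [msubst_append, msubst_closed _ hM₁]
  rw [heq] at h
  obtain ⟨Ns, hNs, hconv⟩ := h
  rw [close_closed_eq hM₁] at hconv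
  refine ⟨σ₁.reverse ++ Ns, ?_, ?_⟩
  · intro X hx
    rcases List.mem_append.mp hx with hx | hx
    · exact hσ₁c X (List.mem_reverse.mp hx)
    · exact hNs X hx
  · rw [appList_append]
    have hred : BetaStar (appList (close M) σ₁.reverse) (msubst σ₁ M) := by
      have h' := absN_reduce σ₁ M hσ₁c
      rw [hlen₁] at h'
      exact h'
    exact Relation.EqvGen.trans _ _ _
      (betastar_conv (betastar_appList hred Ns)) hconv

lemma omega_closed : Closed Omega := by
  constructor <;> exact ⟨Nat.one_pos, Nat.one_pos⟩

lemma closed_app {A B : Lam} (hA : Closed A) (hB : Closed B) : Closed (app A B) :=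
  ⟨hA, hB⟩

lemma homega_closed {M N : Lam} (h : HOmega M N) : Closed M ∧ Closed N := by
  induction h with
  | refl M hM => exact ⟨hM, hM⟩
  | wbetaL U N h =>
      exact ⟨h, closedUnder_subst h.1 h.2 (Nat.le_refl 0)⟩
  | wbetaR U N h =>
      exact ⟨closedUnder_subst h.1 h.2 (Nat.le_refl 0), h⟩
  | unsolvL M hM _ => exact ⟨hM, omega_closed⟩
  | unsolvR M hM _ => exact ⟨omega_closed, hM⟩
  | leibnitz X Y M N hX hY hM hN h1 h2 ih1 ih2 =>
      exact ⟨closedUnder_subst hX hN (Nat.le_refl 0),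
        closedUnder_subst hY hN (Nat.le_refl 0)⟩
  | omega_rule P Q hP hQ h ih => exact ⟨hP, hQ⟩

lemma homega_symm {M N : Lam} (h : HOmega M N) : HOmega N M := by
  obtain ⟨hM, hN⟩ := homega_closed h
  have hvar : ClosedUnder 1 (var 0 : Lam) := Nat.one_pos
  have key := HOmega.leibnitz (var 0) M M N hvar
    (closedUnder_mono hM (Nat.zero_le 1)) hM hN ?_ h
  · rwa [subst_var_eq, subst_closed0 _ _ hM] at key
  · rw [subst_var_eq, subst_closed0 _ _ hM]
    exact HOmega.refl M hM

lemma homega_trans {A B C : Lam} (h1 : HOmega A B) (h2 : HOmega B C) : HOmega A C := by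
  obtain ⟨hA, hB⟩ := homega_closed h1
  obtain ⟨_, hC⟩ := homega_closed h2
  have hvar : ClosedUnder 1 (var 0 : Lam) := Nat.one_pos
  have key := HOmega.leibnitz A (var 0) B C
    (closedUnder_mono hA (Nat.zero_le 1)) hvar hB hC ?_ h2
  · rwa [subst_closed0 _ _ hA, subst_var_eq] at key
  · rw [subst_closed0 _ _ hA, subst_var_eq]
    exact h1

lemma subst_app_var_left {A C : Lam} (hC : Closed C) :
    subst 0 A (app (var 0) C) = app A C := by
  simp [subst, subst_closed0 _ _ hC]

lemma subst_app_var_right {B C : Lam} (hC : Closed C) :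
    subst 0 B (app C (var 0)) = app C B := by
  simp [subst, subst_closed0 _ _ hC]

lemma homega_app_left {A A' C : Lam} (h : HOmega A A') (hC : Closed C) :
    HOmega (app A C) (app A' C) := by
  obtain ⟨hA, hA'⟩ := homega_closed h
  have hAC : Closed (app A C) := closed_app hA hC
  have hX : ClosedUnder 1 (app (var 0) C) :=
    ⟨Nat.one_pos, closedUnder_mono hC (Nat.zero_le 1)⟩
  have hY : ClosedUnder 1 (app A C) := closedUnder_mono hAC (Nat.zero_le 1)
  have key := HOmega.leibnitz (app (var 0) C) (app A C) A A' hX hY hA hA' ?_ h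
  · apply homega_symm
    rwa [subst_app_var_left hC, subst_closed0 _ _ hAC] at key
  · rw [subst_app_var_left hC, subst_closed0 _ _ hAC]
    exact HOmega.refl _ hAC

lemma homega_app_right {C B B' : Lam} (hC : Closed C) (h : HOmega B B') :
    HOmega (app C B) (app C B') := by
  obtain ⟨hB, hB'⟩ := homega_closed h
  have hCB : Closed (app C B) := closed_app hC hB
  have hX : ClosedUnder 1 (app C (var 0)) :=
    ⟨closedUnder_mono hC (Nat.zero_le 1), Nat.one_pos⟩
  have hY : ClosedUnder 1 (app C B) := closedUnder_mono hCB (Nat.zero_le 1)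
  have key := HOmega.leibnitz (app C (var 0)) (app C B) B B' hX hY hB hB' ?_ h
  · apply homega_symm
    rwa [subst_app_var_right hC, subst_closed0 _ _ hCB] at key
  · rw [subst_app_var_right hC, subst_closed0 _ _ hCB]
    exact HOmega.refl _ hCB

/-- Main lemma: one BO step, under a closing substitution, yields Hω-equality. -/
lemma bo_homega {A B : Lam} (h : BO A B) : ∀ (σ : List Lam), (∀ X ∈ σ, Closed X) →
    fvBound A ≤ σ.length → fvBound B ≤ σ.length →
    HOmega (msubst σ A) (msubst σ B) := by
  induction h with
  | beta U V =>
      intro σ hσ hA hB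
      have hbounds : fvBound (lam U) ≤ σ.length ∧ fvBound V ≤ σ.length := by
        simp only [fvBound] at hA
        exact ⟨le_trans (le_max_left _ _) hA, le_trans (le_max_right _ _) hA⟩
      obtain ⟨hU, hV⟩ := hbounds
      obtain ⟨Bo, hBo, hBs⟩ := msubst_lam σ hσ U
      have hVσ : Closed (msubst σ V) := closed_msubst hσ (closedUnder_of_fvBound_le hV)
      have hredex : Closed (msubst σ (app (lam U) V)) :=
        closed_msubst hσ (closedUnder_of_fvBound_le hA)
      rw [msubst_app, hBo] at hredex ⊢
      have hw := HOmega.wbetaL Bo (msubst σ V) hredex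
      rw [msubst_subst0 σ hσ U V hV, ← hBs (msubst σ V) hVσ]
      exact hw
  | omega M hns hne =>
      intro σ hσ hA hB
      rw [msubst_closed σ omega_closed]
      have hMσ : Closed (msubst σ M) := closed_msubst hσ (closedUnder_of_fvBound_le hA)
      by_cases he : msubst σ M = Omega
      · rw [he]; exact HOmega.refl _ omega_closed
      · exact HOmega.unsolvL _ hMσ (fun hs => hns (solvable_msubst hσ hA hs))
  | appL N hMM ih =>
      intro σ hσ hA hB
      simp only [fvBound] at hA hB
      rw [msubst_app, msubst_app]
      exact homega_app_left
        (ih σ hσ (le_trans (le_max_left _ _) hA) (le_trans (le_max_left _ _) hB))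
        (closed_msubst hσ (closedUnder_of_fvBound_le (le_trans (le_max_right _ _) hA)))
  | appR M hNN ih =>
      intro σ hσ hA hB
      simp only [fvBound] at hA hB
      rw [msubst_app, msubst_app]
      exact homega_app_right
        (closed_msubst hσ (closedUnder_of_fvBound_le (le_trans (le_max_left _ _) hA)))
        (ih σ hσ (le_trans (le_max_right _ _) hA) (le_trans (le_max_right _ _) hB))
  | @lam M M' hMM ih =>
      intro σ hσ hA hB
      simp only [fvBound] at hA hB
      obtain ⟨Bo, hBo, hBs⟩ := msubst_lam σ hσ M
      obtain ⟨Bo', hBo', hBs'⟩ := msubst_lam σ hσ M'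
      have hlamB : Closed (msubst σ (lam M)) :=
        closed_msubst hσ (closedUnder_of_fvBound_le (by simp only [fvBound]; omega))
      have hlamB' : Closed (msubst σ (lam M')) :=
        closed_msubst hσ (closedUnder_of_fvBound_le (by simp only [fvBound]; omega))
      rw [hBo] at hlamB
      rw [hBo'] at hlamB'
      rw [hBo, hBo']
      apply HOmega.omega_rule _ _ hlamB hlamB'
      intro P hP
      have h1 : HOmega (app (lam Bo) P) (msubst (P :: σ) M) := by
        have := HOmega.wbetaL Bo P (closed_app hlamB hP)
        rwa [hBs P hP] at this
      have h3 : HOmega (msubst (P :: σ) M') (app (lam Bo') P) := by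
        have := HOmega.wbetaR Bo' P (closed_app hlamB' hP)
        rwa [hBs' P hP] at this
      have h2 : HOmega (msubst (P :: σ) M) (msubst (P :: σ) M') := by
        apply ih (P :: σ)
        · intro X hx
          rcases List.mem_cons.mp hx with hx | hx
          · rwa [hx]
          · exact hσ X hx
        · simp only [List.length_cons]; omega
        · simp only [List.length_cons]; omega
      exact homega_trans h1 (homega_trans h2 h3)


/-- Full βΩ-conversion between closed terms implies Hω-equality. -/
theorem boconv_homega (M N : Lam) (hM : Closed M) (hN : Closed N) (h : BOConv M N) :
    HOmega M N := by
  have key : ∀ A B : Lam, BOConv A B → ∀ σ : List Lam, (∀ X ∈ σ, Closed X) →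
      fvBound A ≤ σ.length → fvBound B ≤ σ.length →
      HOmega (msubst σ A) (msubst σ B) := by
    intro A B h
    induction h with
    | rel X Y hr => exact bo_homega hr
    | refl X =>
        intro σ hσ hA _
        exact HOmega.refl _ (closed_msubst hσ (closedUnder_of_fvBound_le hA))
    | symm X Y _ ih =>
        intro σ hσ hA hB
        exact homega_symm (ih σ hσ hB hA)
    | trans X Y Z _ _ ih1 ih2 =>
        intro σ hσ hA hC
        set σ' := σ ++ List.replicate (fvBound Y) Omega with hσ'def
        have hσ' : ∀ W ∈ σ', Closed W := by
          intro W hw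
          rcases List.mem_append.mp hw with hw | hw
          · exact hσ W hw
          · rw [List.eq_of_mem_replicate hw]; exact omega_closed
        have hlen : σ'.length = σ.length + fvBound Y := by
          simp [hσ'def]
        have hA' : fvBound X ≤ σ'.length := by omega
        have hC' : fvBound Z ≤ σ'.length := by omega
        have hB' : fvBound Y ≤ σ'.length := by omega
        have e1 : msubst σ' X = msubst σ X := by
          rw [hσ'def, msubst_append,
            msubst_closed _ (closed_msubst hσ (closedUnder_of_fvBound_le hA))]
        have e2 : msubst σ' Z = msubst σ Z := by
          rw [hσ'def, msubst_append,
            msubst_closed _ (closed_msubst hσ (closedUnder_of_fvBound_le hC))]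
        have := homega_trans (ih1 σ' hσ' hA' hB') (ih2 σ' hσ' hB' hC')
        rwa [e1, e2] at this
  have h0 := key M N h [] (by intro X hx; simp at hx)
    (by rw [closed_fvBound hM]; exact Nat.zero_le _)
    (by rw [closed_fvBound hN]; exact Nat.zero_le _)
  simpa [msubst] using h0

end Lam
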